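/- arXiv:1605.03837 — 8 statements merged into one kernel-verified Lean document; each statement's English description precedes it below -/
import Mathlib

section
/- The simplified insertion product is left-symmetric: for all elements x, y, z of the algebra A (in particular for all words over S, including the empty word), ((x ∘ y) ∘ z) − (x ∘ (y ∘ z)) = ((y ∘ x) ∘ z) − (y ∘ (x ∘ z)). -/
/-- The sum of all insertions of the word `x` into the word `y`:
`x ∘ y = ∑_{i=0}^{|y|} y₁⋯y_i x y_{i+1}⋯y_q`, as an element of the free
vector space on words. -/
noncomputable def wordIns {S : Type} (x y : List S) : List S →₀ ℝ :=
  ∑ i ∈ Finset.range (y.length + 1),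
    Finsupp.single (y.take i ++ x ++ y.drop i) (1 : ℝ)

/-- The simplified insertion product: the bilinear extension of `wordIns`
to the monoid algebra of the free monoid on `S` (the ℝ-vector space with
basis all words over `S`). -/
noncomputable def simpIns {S : Type} (a b : List S →₀ ℝ) : List S →₀ ℝ :=
  a.sum fun x cx => b.sum fun y cy => (cx * cy) • wordIns x y

open Finset Finsupp

namespace SimpInsLS

variable {S : Type}

/-- Insertion of the word `x` at slot `i` of the word `y`. -/
def insW (i : ℕ) (x y : List S) : List S := y.take i ++ x ++ y.drop i

lemma wordIns_def (x w : List S) :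
    wordIns x w = ∑ i ∈ Finset.range (w.length + 1), Finsupp.single (insW i x w) (1 : ℝ) := rfl

lemma insW_length {i : ℕ} {y : List S} (hi : i ≤ y.length) (x : List S) :
    (insW i x y).length = x.length + y.length := by
  simp [insW]; omega

lemma insW_eq_of_split {i : ℕ} {y u v : List S} (h : y = u ++ v) (hi : u.length = i)
    (x : List S) : insW i x y = u ++ x ++ v := by
  subst h; subst hi
  rw [insW, List.take_left, List.drop_left]

/-- Double insertion: `x` at slot `a` and `y` at slot `b` of `z`, with `a ≤ b`. -/
def dIns (x y : List S) (a b : ℕ) (z : List S) : List S :=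
  z.take a ++ x ++ ((z.take b).drop a ++ (y ++ z.drop b))

lemma lemA {i k : ℕ} {y z : List S} (hi : i ≤ y.length) (hk : k ≤ z.length) (x : List S) :
    insW (k + i) x (insW k y z) = insW k (insW i x y) z := by
  rw [insW_eq_of_split (u := z.take k ++ y.take i) (v := y.drop i ++ z.drop k)
      (by rw [insW]; simp only [List.append_assoc]
          rw [← List.append_assoc (y.take i), List.take_append_drop])
      (by simp [List.length_take, List.length_append]; omega),
    insW_eq_of_split (u := z.take k) (v := z.drop k) (List.take_append_drop k z).symm
      (by simp [List.length_take]; omega)]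
  simp [insW, List.append_assoc]

lemma lemB {m j : ℕ} {z : List S} (hm : m ≤ j) (hj : j ≤ z.length) (x y : List S) :
    insW m x (insW j y z) = dIns x y m j z := by
  rw [insW_eq_of_split (u := z.take m) (v := (z.take j).drop m ++ (y ++ z.drop j))
      (by have h1 : z.take j = z.take m ++ (z.take j).drop m := by
            conv_lhs => rw [← List.take_append_drop m (z.take j)]
            rw [List.take_take, Nat.min_eq_left hm]
          rw [insW]
          conv_lhs => rw [h1]
          simp [List.append_assoc])
      (by simp [List.length_take]; omega)]
  rfl

lemma lemC {j b : ℕ} {z : List S} (hjb : j ≤ b) (hb : b ≤ z.length) (x y : List S) :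
    insW (y.length + b) x (insW j y z) = dIns y x j b z := by
  rw [insW_eq_of_split (u := z.take j ++ y ++ (z.take b).drop j) (v := z.drop b)
      (by rw [insW]
          have h1 : z.drop j = (z.take b).drop j ++ z.drop b := by
            rw [List.drop_take]
            conv_lhs => rw [← List.take_append_drop (b - j) (z.drop j)]
            congr 1
            rw [List.drop_drop]
            congr 1
            omega
          rw [h1]; simp [List.append_assoc])
      (by simp [List.length_take, List.length_drop]; omega)]
  simp [dIns, List.append_assoc]

/-- Triangular reindexing. -/
lemma tri {M : Type*} [AddCommMonoid M] (n : ℕ) (g : ℕ → ℕ → M) :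
    ∑ j ∈ Finset.range (n + 1), ∑ t ∈ Finset.range (n - j), g j (j + 1 + t)
      = ∑ b ∈ Finset.range (n + 1), ∑ a ∈ Finset.range b, g a b := by
  induction n with
  | zero => simp
  | succ n ih =>
    rw [Finset.sum_range_succ (n := n + 1), Finset.sum_range_succ (n := n + 1)]
    simp only [Nat.sub_self, Finset.range_zero, Finset.sum_empty, add_zero]
    have h1 : ∀ j ∈ Finset.range (n + 1),
        ∑ t ∈ Finset.range (n + 1 - j), g j (j + 1 + t)
          = (∑ t ∈ Finset.range (n - j), g j (j + 1 + t)) + g j (n + 1) := by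
      intro j hj
      have hjn : j ≤ n := Nat.lt_succ_iff.mp (Finset.mem_range.mp hj)
      have h2 : n + 1 - j = (n - j) + 1 := by omega
      rw [h2, Finset.sum_range_succ]
      congr 2
      omega
    rw [Finset.sum_congr rfl h1, Finset.sum_add_distrib, ih]

/-- The sum of disjoint double insertions of `x` (left) and `y` (right) into `z`. -/
noncomputable def Psum (x y z : List S) : List S →₀ ℝ :=
  ∑ b ∈ Finset.range (z.length + 1), ∑ a ∈ Finset.range b,
    Finsupp.single (dIns x y a b z) (1 : ℝ)

lemma inner_decomp (x y z : List S) {j : ℕ} (hj : j ≤ z.length) :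
    wordIns x (insW j y z)
      = (∑ m ∈ Finset.range j, Finsupp.single (dIns x y m j z) (1 : ℝ))
        + ((∑ i ∈ Finset.range (y.length + 1),
              Finsupp.single (insW j (insW i x y) z) (1 : ℝ))
          + (∑ t ∈ Finset.range (z.length - j),
              Finsupp.single (dIns y x j (j + 1 + t) z) (1 : ℝ))) := by
  rw [wordIns_def, insW_length hj]
  have hsplit : y.length + z.length + 1 = j + ((y.length + 1) + (z.length - j)) := by omega
  rw [hsplit, Finset.sum_range_add, Finset.sum_range_add]
  congr 1
  · exact Finset.sum_congr rfl fun m hm =>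
      congrArg (Finsupp.single · (1 : ℝ))
        (lemB (Nat.le_of_lt (Finset.mem_range.mp hm)) hj x y)
  congr 1
  · exact Finset.sum_congr rfl fun i hi =>
      congrArg (Finsupp.single · (1 : ℝ))
        (lemA (Nat.lt_succ_iff.mp (Finset.mem_range.mp hi)) hj x)
  · refine Finset.sum_congr rfl fun t ht => ?_
    have ht' : t < z.length - j := Finset.mem_range.mp ht
    have hidx : j + (y.length + 1 + t) = y.length + (j + 1 + t) := by omega
    rw [hidx, lemC (by omega) (by omega) x y]

lemma decomp (x y z : List S) :
    ∑ j ∈ Finset.range (z.length + 1), wordIns x (insW j y z)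
      = (∑ i ∈ Finset.range (y.length + 1), wordIns (insW i x y) z)
        + (Psum x y z + Psum y x z) := by
  rw [Finset.sum_congr rfl fun j hj =>
    inner_decomp x y z (Nat.lt_succ_iff.mp (Finset.mem_range.mp hj))]
  rw [Finset.sum_add_distrib, Finset.sum_add_distrib]
  simp only [Nat.succ_eq_add_one]
  have h3 : (∑ j ∈ Finset.range (z.length + 1), ∑ t ∈ Finset.range (z.length - j),
      Finsupp.single (dIns y x j (j + 1 + t) z) (1 : ℝ)) = Psum y x z := by
    rw [Psum]; exact tri z.length fun a b => Finsupp.single (dIns y x a b z) (1 : ℝ)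
  rw [h3, Finset.sum_comm]
  have h2 : ∀ i ∈ Finset.range (y.length + 1),
      (∑ j ∈ Finset.range (z.length + 1),
        Finsupp.single (insW j (insW i x y) z) (1 : ℝ)) = wordIns (insW i x y) z :=
    fun i _ => (wordIns_def _ _).symm
  rw [Finset.sum_congr rfl h2]
  simp only [Psum]
  abel

lemma key (x y z : List S) :
    (∑ i ∈ Finset.range (y.length + 1), wordIns (insW i x y) z)
      - (∑ j ∈ Finset.range (z.length + 1), wordIns x (insW j y z))
    = (∑ i ∈ Finset.range (x.length + 1), wordIns (insW i y x) z)
      - (∑ j ∈ Finset.range (z.length + 1), wordIns y (insW j x z)) := by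
  rw [decomp x y z, decomp y x z]
  abel

lemma simpIns_zero_left (b : List S →₀ ℝ) : simpIns 0 b = 0 :=
  Finsupp.sum_zero_index

lemma simpIns_zero_right (a : List S →₀ ℝ) : simpIns a 0 = 0 := by
  simp [simpIns, Finsupp.sum_zero_index]

lemma simpIns_add_left (a b c : List S →₀ ℝ) :
    simpIns (a + b) c = simpIns a c + simpIns b c := by
  unfold simpIns
  refine Finsupp.sum_add_index' (fun x => ?_) (fun x r s => ?_)
  · simp
  · simp [add_mul, add_smul, Finsupp.sum_add]

lemma simpIns_add_right (a b c : List S →₀ ℝ) :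
    simpIns a (b + c) = simpIns a b + simpIns a c := by
  unfold simpIns
  rw [← Finsupp.sum_add]
  exact Finsupp.sum_congr fun x _ =>
    Finsupp.sum_add_index' (by simp) (by intros; simp [mul_add, add_smul])

lemma simpIns_smul_left (r : ℝ) (a b : List S →₀ ℝ) :
    simpIns (r • a) b = r • simpIns a b := by
  unfold simpIns
  rw [Finsupp.sum_smul_index (fun i => by simp)]
  simp [Finsupp.smul_sum, smul_smul, mul_assoc]

lemma simpIns_smul_right (r : ℝ) (a b : List S →₀ ℝ) :
    simpIns a (r • b) = r • simpIns a b := by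
  unfold simpIns
  rw [Finsupp.smul_sum]
  refine Finsupp.sum_congr fun x _ => ?_
  rw [Finsupp.sum_smul_index (fun i => by simp), Finsupp.smul_sum]
  exact Finsupp.sum_congr fun y _ => by rw [smul_smul, mul_left_comm]

lemma simpIns_single_single (x y : List S) (r s : ℝ) :
    simpIns (Finsupp.single x r) (Finsupp.single y s) = (r * s) • wordIns x y := by
  unfold simpIns
  rw [Finsupp.sum_single_index (by simp), Finsupp.sum_single_index (by simp)]

lemma simpIns_sum_left {ι : Type*} (s : Finset ι) (f : ι → List S →₀ ℝ) (c : List S →₀ ℝ) :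
    simpIns (∑ i ∈ s, f i) c = ∑ i ∈ s, simpIns (f i) c :=
  map_sum (AddMonoidHom.mk' (fun a => simpIns a c) (fun a b => simpIns_add_left a b c)) f s

lemma simpIns_sum_right {ι : Type*} (s : Finset ι) (f : ι → List S →₀ ℝ) (c : List S →₀ ℝ) :
    simpIns c (∑ i ∈ s, f i) = ∑ i ∈ s, simpIns c (f i) :=
  map_sum (AddMonoidHom.mk' (fun a => simpIns c a) (fun a b => simpIns_add_right c a b)) f s

lemma tripleL (xw yw zw : List S) (xr yr zr : ℝ) :
    simpIns (simpIns (Finsupp.single xw xr) (Finsupp.single yw yr)) (Finsupp.single zw zr)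
      = (xr * yr * zr) • ∑ i ∈ Finset.range (yw.length + 1), wordIns (insW i xw yw) zw := by
  rw [simpIns_single_single, simpIns_smul_left, wordIns_def, simpIns_sum_left]
  simp only [simpIns_single_single, one_mul]
  rw [← Finset.smul_sum, smul_smul]

lemma tripleR (xw yw zw : List S) (xr yr zr : ℝ) :
    simpIns (Finsupp.single xw xr) (simpIns (Finsupp.single yw yr) (Finsupp.single zw zr))
      = (xr * yr * zr) • ∑ j ∈ Finset.range (zw.length + 1), wordIns xw (insW j yw zw) := by
  rw [simpIns_single_single, simpIns_smul_right, wordIns_def, simpIns_sum_right]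
  simp only [simpIns_single_single, mul_one]
  rw [← Finset.smul_sum, smul_smul]
  congr 1
  ring

lemma base (xw yw zw : List S) (xr yr zr : ℝ) :
    simpIns (simpIns (Finsupp.single xw xr) (Finsupp.single yw yr)) (Finsupp.single zw zr)
      - simpIns (Finsupp.single xw xr)
          (simpIns (Finsupp.single yw yr) (Finsupp.single zw zr))
    = simpIns (simpIns (Finsupp.single yw yr) (Finsupp.single xw xr)) (Finsupp.single zw zr)
      - simpIns (Finsupp.single yw yr)
          (simpIns (Finsupp.single xw xr) (Finsupp.single zw zr)) := by
  rw [tripleL, tripleR, tripleL, tripleR, ← smul_sub, ← smul_sub,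
    show yr * xr * zr = xr * yr * zr by ring, key xw yw zw]

end SimpInsLS

open SimpInsLS in
/-- The simplified insertion product is left-symmetric:
`(x ∘ y) ∘ z − x ∘ (y ∘ z) = (y ∘ x) ∘ z − y ∘ (x ∘ z)` for all elements of the algebra. -/
theorem simpIns_left_symmetric {S : Type} [Nonempty S] (x y z : List S →₀ ℝ) :
    simpIns (simpIns x y) z - simpIns x (simpIns y z) =
      simpIns (simpIns y x) z - simpIns y (simpIns x z) := by
  induction x using Finsupp.induction_linear with
  | zero => simp [simpIns_zero_left, simpIns_zero_right]
  | add a b ha hb =>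
    simp only [simpIns_add_left, simpIns_add_right]
    rw [← sub_add_sub_comm, ← sub_add_sub_comm, ha, hb]
  | single xw xr =>
    induction y using Finsupp.induction_linear with
    | zero => simp [simpIns_zero_left, simpIns_zero_right]
    | add a b ha hb =>
      simp only [simpIns_add_left, simpIns_add_right]
      rw [← sub_add_sub_comm, ← sub_add_sub_comm, ha, hb]
    | single yw yr =>
      induction z using Finsupp.induction_linear with
      | zero => simp [simpIns_zero_left, simpIns_zero_right]
      | add a b ha hb =>
        simp only [simpIns_add_left, simpIns_add_right]
        rw [← sub_add_sub_comm, ← sub_add_sub_comm, ha, hb]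
      | single zw zr => exact base xw yw zw xr yr zr
end

section
/- For all words x, y and z = z₁⋯z_r over S, the associator of the simplified insertion satisfies the closed formula ((x ∘ y) ∘ z) − (x ∘ (y ∘ z)) = − ∑_{0 ≤ j < k ≤ r} z₁⋯z_j x z_{j+1}⋯z_k y z_{k+1}⋯z_r − ∑_{0 ≤ k < j ≤ r} z₁⋯z_k y z_{k+1}⋯z_j x z_{j+1}⋯z_r; that is, it equals the negative of the sum over all ordered pairs of distinct insertion gaps of z of the words obtained by inserting x into one gap and y into the other (so x and y are separated by at least one letter of z). In particular this expression is symmetric under interchanging x and y. -/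
/-- The sum over all pairs of gaps `0 ≤ j < k ≤ |z|` of the words obtained by
inserting `x` into gap `j` of `z` and `y` into gap `k` of `z`:
`∑_{0 ≤ j < k ≤ r} z₁⋯z_j x z_{j+1}⋯z_k y z_{k+1}⋯z_r`. -/
noncomputable def doubleIns {S : Type} (x y z : List S) : List S →₀ ℝ :=
  ∑ k ∈ Finset.range (z.length + 1), ∑ j ∈ Finset.range k,
    Finsupp.single (z.take j ++ x ++ (z.drop j).take (k - j) ++ y ++ z.drop k) (1 : ℝ)

open Finset

private lemma aux_sum_tri {M : Type*} [AddCommMonoid M] (n : ℕ) (f : ℕ → ℕ → M) :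
    ∑ k ∈ range (n + 1), ∑ t ∈ range (n - k), f k (k + 1 + t)
      = ∑ k ∈ range (n + 1), ∑ j ∈ range k, f j k := by
  induction n with
  | zero => simp
  | succ n ih =>
    rw [Finset.sum_range_succ (fun k => ∑ t ∈ range (n + 1 - k), f k (k + 1 + t))]
    rw [Finset.sum_range_succ (fun k => ∑ j ∈ range k, f j k)]
    simp only [Nat.sub_self, range_zero, sum_empty, add_zero]
    have h1 : ∀ k ∈ range (n + 1),
        ∑ t ∈ range (n + 1 - k), f k (k + 1 + t)
          = (∑ t ∈ range (n - k), f k (k + 1 + t)) + f k (n + 1) := by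
      intro k hk
      rw [mem_range] at hk
      rw [show n + 1 - k = (n - k) + 1 by omega, Finset.sum_range_succ,
        show k + 1 + (n - k) = n + 1 by omega]
    rw [Finset.sum_congr rfl h1, Finset.sum_add_distrib, ih]

private lemma aux_mid {S : Type} (x A B : List S) (k p : ℕ) (h : A.length = k) :
    (A ++ B).take (k + p) ++ x ++ (A ++ B).drop (k + p)
      = A ++ (B.take p ++ x ++ B.drop p) := by
  subst h
  simp [List.take_append, List.drop_append, List.append_assoc, List.take_of_length_le,
    List.drop_of_length_le]

private lemma aux_simpIns_single_left {S : Type} (x : List S) (b : List S →₀ ℝ) :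
    simpIns (Finsupp.single x 1) b = b.sum fun y cy => cy • wordIns x y := by
  unfold simpIns
  rw [Finsupp.sum_single_index (by simp)]
  simp only [one_mul]

private lemma aux_simpIns_single_right {S : Type} (a : List S →₀ ℝ) (z : List S) :
    simpIns a (Finsupp.single z 1) = a.sum fun x cx => cx • wordIns x z := by
  unfold simpIns
  refine Finsupp.sum_congr fun x _ => ?_
  rw [Finsupp.sum_single_index (by simp)]
  simp only [mul_one]

private lemma aux_expand_left {S : Type} (s : Finset ℕ) (g : ℕ → List S) (z : List S) :
    simpIns (∑ i ∈ s, Finsupp.single (g i) (1 : ℝ)) (Finsupp.single z 1)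
      = ∑ i ∈ s, wordIns (g i) z := by
  rw [aux_simpIns_single_right,
    ← Finsupp.sum_finset_sum_index (fun a => by simp) (fun a b₁ b₂ => by simp [add_smul])]
  refine Finset.sum_congr rfl fun i _ => ?_
  rw [Finsupp.sum_single_index (by simp)]
  simp

private lemma aux_expand_right {S : Type} (x : List S) (s : Finset ℕ) (g : ℕ → List S) :
    simpIns (Finsupp.single x 1) (∑ i ∈ s, Finsupp.single (g i) (1 : ℝ))
      = ∑ i ∈ s, wordIns x (g i) := by
  rw [aux_simpIns_single_left,
    ← Finsupp.sum_finset_sum_index (fun a => by simp) (fun a b₁ b₂ => by simp [add_smul])]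
  refine Finset.sum_congr rfl fun i _ => ?_
  rw [Finsupp.sum_single_index (by simp)]
  simp

private lemma aux_key {S : Type} (x y z : List S) :
    ∑ k ∈ range (z.length + 1), wordIns x (z.take k ++ y ++ z.drop k)
      = (∑ i ∈ range (y.length + 1), wordIns (y.take i ++ x ++ y.drop i) z)
        + doubleIns x y z + doubleIns y x z := by
  have step : ∀ k ∈ range (z.length + 1), wordIns x (z.take k ++ y ++ z.drop k)
      = (∑ j ∈ range k,
          Finsupp.single (z.take j ++ x ++ (z.drop j).take (k - j) ++ y ++ z.drop k) (1 : ℝ))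
        + (∑ i ∈ range (y.length + 1),
            Finsupp.single (z.take k ++ (y.take i ++ x ++ y.drop i) ++ z.drop k) (1 : ℝ))
        + (∑ t ∈ range (z.length - k),
            Finsupp.single (z.take k ++ y ++ (z.drop k).take ((k + 1 + t) - k) ++ x
              ++ z.drop (k + 1 + t)) (1 : ℝ)) := by
    intro k hk
    rw [mem_range] at hk
    have hk' : k ≤ z.length := by omega
    have hlen : (z.take k).length = k := by simp; omega
    unfold wordIns
    rw [show (z.take k ++ y ++ z.drop k).length + 1
        = k + ((y.length + 1) + (z.length - k)) by simp; omega]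
    rw [Finset.sum_range_add, Finset.sum_range_add, ← add_assoc]
    congr 1
    · congr 1
      · -- chunk 1 : p < k
        refine Finset.sum_congr rfl fun p hp => ?_
        rw [mem_range] at hp
        have hp1 : p ≤ (z.take k).length := by omega
        have hp2 : p ≤ (z.take k ++ y).length := by simp; omega
        have hw : (z.take k ++ y ++ z.drop k).take p ++ x
              ++ (z.take k ++ y ++ z.drop k).drop p
            = z.take p ++ x ++ (z.drop p).take (k - p) ++ y ++ z.drop k := by
          rw [List.take_append_of_le_length hp2, List.take_append_of_le_length hp1,
            List.take_take, Nat.min_eq_left hp.le,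
            List.drop_append_of_le_length hp2, List.drop_append_of_le_length hp1,
            List.drop_take]
          simp [List.append_assoc]
        rw [hw]
      · -- chunk 2 : k ≤ p ≤ k + q
        refine Finset.sum_congr rfl fun p hp => ?_
        rw [mem_range] at hp
        have hw : (z.take k ++ y ++ z.drop k).take (k + p) ++ x
              ++ (z.take k ++ y ++ z.drop k).drop (k + p)
            = z.take k ++ (y.take p ++ x ++ y.drop p) ++ z.drop k := by
          rw [List.append_assoc (z.take k) y (z.drop k),
            aux_mid x (z.take k) (y ++ z.drop k) k p hlen,
            List.take_append_of_le_length (by omega : p ≤ y.length),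
            List.drop_append_of_le_length (by omega : p ≤ y.length)]
          simp [List.append_assoc]
        rw [hw]
    · -- chunk 3 : p > k + q
      refine Finset.sum_congr rfl fun t ht => ?_
      rw [mem_range] at ht
      have hw : (z.take k ++ y ++ z.drop k).take (k + (y.length + 1 + t)) ++ x
            ++ (z.take k ++ y ++ z.drop k).drop (k + (y.length + 1 + t))
          = z.take k ++ y ++ (z.drop k).take ((k + 1 + t) - k) ++ x
            ++ z.drop (k + 1 + t) := by
        rw [List.append_assoc (z.take k) y (z.drop k),
          aux_mid x (z.take k) (y ++ z.drop k) k (y.length + 1 + t) hlen,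
          show y.length + 1 + t = y.length + (1 + t) by omega,
          List.take_length_add_append, List.drop_length_add_append, List.drop_drop,
          show k + (1 + t) = k + 1 + t by omega,
          show (k + 1 + t) - k = 1 + t by omega]
        simp [List.append_assoc]
      rw [hw]
  rw [Finset.sum_congr rfl step, Finset.sum_add_distrib, Finset.sum_add_distrib]
  have e2 : (∑ k ∈ range (z.length + 1), ∑ i ∈ range (y.length + 1),
        Finsupp.single (z.take k ++ (y.take i ++ x ++ y.drop i) ++ z.drop k) (1 : ℝ))
      = ∑ i ∈ range (y.length + 1), wordIns (y.take i ++ x ++ y.drop i) z := by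
    unfold wordIns
    exact Finset.sum_comm
  have e3 := aux_sum_tri z.length
    (fun j k => Finsupp.single (z.take j ++ y ++ (z.drop j).take (k - j) ++ x ++ z.drop k) (1 : ℝ))
  unfold doubleIns
  rw [e2]
  rw [show (∑ k ∈ range (z.length + 1), ∑ t ∈ range (z.length - k),
      Finsupp.single (z.take k ++ y ++ (z.drop k).take ((k + 1 + t) - k) ++ x
        ++ z.drop (k + 1 + t)) (1 : ℝ))
    = ∑ k ∈ range (z.length + 1), ∑ j ∈ range k,
      Finsupp.single (z.take j ++ y ++ (z.drop j).take (k - j) ++ x ++ z.drop k) (1 : ℝ)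
    from e3]
  abel

/-- Closed formula for the associator of the simplified insertion on words:
`(x ∘ y) ∘ z − x ∘ (y ∘ z)` equals the negative of the sum over all ordered pairs of
distinct gaps of `z` of the insertions of `x` and `y` into those gaps; in particular
it is symmetric in `x` and `y`. -/
theorem simpIns_associator_formula {S : Type} [Nonempty S] (x y z : List S) :
    simpIns (simpIns (Finsupp.single x 1) (Finsupp.single y 1)) (Finsupp.single z 1)
        - simpIns (Finsupp.single x 1)
            (simpIns (Finsupp.single y 1) (Finsupp.single z 1)) =
      - doubleIns x y z - doubleIns y x z := by
  have e1 : simpIns (Finsupp.single x 1) (Finsupp.single y 1) = wordIns x y := by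
    rw [aux_simpIns_single_left, Finsupp.sum_single_index (by simp)]
    simp
  have e2 : simpIns (Finsupp.single y 1) (Finsupp.single z 1) = wordIns y z := by
    rw [aux_simpIns_single_left, Finsupp.sum_single_index (by simp)]
    simp
  rw [e1, e2]
  rw [show wordIns x y = ∑ i ∈ range (y.length + 1),
      Finsupp.single (y.take i ++ x ++ y.drop i) (1 : ℝ) from rfl,
    aux_expand_left]
  rw [show wordIns y z = ∑ i ∈ range (z.length + 1),
      Finsupp.single (z.take i ++ y ++ z.drop i) (1 : ℝ) from rfl,
    aux_expand_right]
  rw [aux_key x y z]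
  abel
end

section
/- The first-letter-matching insertion operation does not satisfy the left-symmetric identity: over the alphabet S = {a, b, c}, taking x = ab, y = abc, z = ac, one has ((x ∘ y) ∘ z) − (x ∘ (y ∘ z)) = −abcabac while ((y ∘ x) ∘ z) − (y ∘ (x ∘ z)) = −ababcac, and these are distinct basis words, so (x∘y)∘z − x∘(y∘z) ≠ (y∘x)∘z − y∘(x∘z). -/
/-- First-letter-matching insertion of the word `x` into the word `y`:
`x` is inserted immediately before each position of `y` whose letter equals the
first letter of `x`:
`x ∘ y = ∑_{j=1}^{q} δ(x₁, y_j) · y₁⋯y_{j−1} x y_j⋯y_q`. -/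
noncomputable def flWordIns {S : Type} [DecidableEq S] (x y : List S) : List S →₀ ℝ :=
  ∑ j ∈ Finset.range y.length,
    (if x.head? = y[j]? then (1 : ℝ) else 0) •
      Finsupp.single (y.take j ++ x ++ y.drop j) (1 : ℝ)

/-- Bilinear extension of the first-letter-matching insertion. -/
noncomputable def flIns {S : Type} [DecidableEq S] (a b : List S →₀ ℝ) : List S →₀ ℝ :=
  a.sum fun x cx => b.sum fun y cy => (cx * cy) • flWordIns x y

section
variable {S : Type} [DecidableEq S]

lemma flIns_single_single (x y : List S) :
    flIns (Finsupp.single x 1) (Finsupp.single y 1) = flWordIns x y := by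
  unfold flIns
  rw [Finsupp.sum_single_index, Finsupp.sum_single_index] <;> simp

lemma flIns_single_add (x : List S) (b b' : List S →₀ ℝ) :
    flIns (Finsupp.single x 1) (b + b') =
      flIns (Finsupp.single x 1) b + flIns (Finsupp.single x 1) b' := by
  unfold flIns
  rw [Finsupp.sum_single_index, Finsupp.sum_single_index, Finsupp.sum_single_index,
    Finsupp.sum_add_index] <;> simp [add_mul, mul_add, add_smul]

end

lemma fw1 : flWordIns [(0:Fin 3),1] [0,1,2] = Finsupp.single [0,1,0,1,2] 1 := by
  unfold flWordIns; simp [Finset.sum_range_succ]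

lemma fw2 : flWordIns [(0:Fin 3),1,0,1,2] [0,2] = Finsupp.single [0,1,0,1,2,0,2] 1 := by
  unfold flWordIns; simp [Finset.sum_range_succ]

lemma fw3 : flWordIns [(0:Fin 3),1,2] [0,2] = Finsupp.single [0,1,2,0,2] 1 := by
  unfold flWordIns; simp [Finset.sum_range_succ]

lemma fw4 : flWordIns [(0:Fin 3),1] [0,1,2,0,2] =
    Finsupp.single [0,1,0,1,2,0,2] 1 + Finsupp.single [0,1,2,0,1,0,2] 1 := by
  unfold flWordIns; simp [Finset.sum_range_succ]

lemma fw5 : flWordIns [(0:Fin 3),1,2] [0,1] = Finsupp.single [0,1,2,0,1] 1 := by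
  unfold flWordIns; simp [Finset.sum_range_succ]

lemma fw6 : flWordIns [(0:Fin 3),1,2,0,1] [0,2] = Finsupp.single [0,1,2,0,1,0,2] 1 := by
  unfold flWordIns; simp [Finset.sum_range_succ]

lemma fw7 : flWordIns [(0:Fin 3),1] [0,2] = Finsupp.single [0,1,0,2] 1 := by
  unfold flWordIns; simp [Finset.sum_range_succ]

lemma fw8 : flWordIns [(0:Fin 3),1,2] [0,1,0,2] =
    Finsupp.single [0,1,2,0,1,0,2] 1 + Finsupp.single [0,1,0,1,2,0,2] 1 := by
  unfold flWordIns; simp [Finset.sum_range_succ]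

/-- Over `S = {a, b, c}` (modelled as `Fin 3` with `a = 0`, `b = 1`, `c = 2`), taking
`x = ab`, `y = abc`, `z = ac`, the first-letter-matching insertion satisfies
`(x∘y)∘z − x∘(y∘z) = −abcabac` while `(y∘x)∘z − y∘(x∘z) = −ababcac`, and these are
distinct, so the left-symmetric identity fails. -/
theorem flIns_not_left_symmetric :
    flIns (flIns (Finsupp.single [(0 : Fin 3), 1] 1) (Finsupp.single [0, 1, 2] 1))
          (Finsupp.single [0, 2] 1)
        - flIns (Finsupp.single [(0 : Fin 3), 1] 1)
            (flIns (Finsupp.single [0, 1, 2] 1) (Finsupp.single [0, 2] 1)) =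
      - Finsupp.single [(0 : Fin 3), 1, 2, 0, 1, 0, 2] 1 ∧
    flIns (flIns (Finsupp.single [(0 : Fin 3), 1, 2] 1) (Finsupp.single [0, 1] 1))
          (Finsupp.single [0, 2] 1)
        - flIns (Finsupp.single [(0 : Fin 3), 1, 2] 1)
            (flIns (Finsupp.single [0, 1] 1) (Finsupp.single [0, 2] 1)) =
      - Finsupp.single [(0 : Fin 3), 1, 0, 1, 2, 0, 2] 1 ∧
    flIns (flIns (Finsupp.single [(0 : Fin 3), 1] 1) (Finsupp.single [0, 1, 2] 1))
          (Finsupp.single [0, 2] 1)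
        - flIns (Finsupp.single [(0 : Fin 3), 1] 1)
            (flIns (Finsupp.single [0, 1, 2] 1) (Finsupp.single [0, 2] 1)) ≠
      flIns (flIns (Finsupp.single [(0 : Fin 3), 1, 2] 1) (Finsupp.single [0, 1] 1))
          (Finsupp.single [0, 2] 1)
        - flIns (Finsupp.single [(0 : Fin 3), 1, 2] 1)
            (flIns (Finsupp.single [0, 1] 1) (Finsupp.single [0, 2] 1)) := by
  have h1 :
      flIns (flIns (Finsupp.single [(0 : Fin 3), 1] 1) (Finsupp.single [0, 1, 2] 1))
          (Finsupp.single [0, 2] 1)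
        - flIns (Finsupp.single [(0 : Fin 3), 1] 1)
            (flIns (Finsupp.single [0, 1, 2] 1) (Finsupp.single [0, 2] 1)) =
      - Finsupp.single [(0 : Fin 3), 1, 2, 0, 1, 0, 2] 1 := by
    rw [flIns_single_single, flIns_single_single, fw1, fw3,
      flIns_single_single, flIns_single_single, fw2, fw4]
    abel
  have h2 :
      flIns (flIns (Finsupp.single [(0 : Fin 3), 1, 2] 1) (Finsupp.single [0, 1] 1))
          (Finsupp.single [0, 2] 1)
        - flIns (Finsupp.single [(0 : Fin 3), 1, 2] 1)
            (flIns (Finsupp.single [0, 1] 1) (Finsupp.single [0, 2] 1)) =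
      - Finsupp.single [(0 : Fin 3), 1, 0, 1, 2, 0, 2] 1 := by
    rw [flIns_single_single, flIns_single_single, fw5, fw7,
      flIns_single_single, flIns_single_single, fw6, fw8]
    abel
  refine ⟨h1, h2, ?_⟩
  rw [h1, h2]
  intro h
  have := congrArg (fun f => f [(0 : Fin 3), 1, 2, 0, 1, 0, 2]) h
  simp [Finsupp.single_apply] at this
end

section
/- The one-letter synchronized insertion product fails the left-symmetric identity: with c(p,q) = p(2q − p + 1)/2 if p < q and c(p,q) = q(q+1)/2 if p ≥ q, one has c(2,3)·c(5,6) − c(3,6)·c(2,9) − (c(3,2)·c(5,6) − c(2,6)·c(3,8)) = 16 ≠ 0; hence for the bilinear product on the ℝ-vector space with basis {a^n : n ≥ 1} defined by a^p ∘ a^q = c(p,q) a^{p+q}, taking x = a², y = a³, z = a⁶ gives ((x∘y)∘z − x∘(y∘z)) − ((y∘x)∘z − y∘(x∘z)) = 16 · a^{11} ≠ 0. -/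
/-- The coefficient `c(p,q)` of the linearized synchronized insertion over a
one-letter alphabet: `a^p ⇉ a^q = c(p,q) a^{p+q}`. -/
def cQ (p q : ℕ) : ℚ :=
  if p < q then (p : ℚ) * (2 * (q : ℚ) - (p : ℚ) + 1) / 2
  else (q : ℚ) * ((q : ℚ) + 1) / 2

/-- The bilinear product on the ℝ-vector space with basis `{a^n : n ≥ 1}` (basis
words modelled by their exponents `n : ℕ`) extending `a^p ∘ a^q = c(p,q) a^{p+q}`. -/
noncomputable def syncProd (a b : ℕ →₀ ℝ) : ℕ →₀ ℝ :=
  a.sum fun p cp => b.sum fun q cq =>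
    (cp * cq * ((cQ p q : ℚ) : ℝ)) • Finsupp.single (p + q) (1 : ℝ)

lemma syncProd_single (p q : ℕ) (r s : ℝ) :
    syncProd (Finsupp.single p r) (Finsupp.single q s)
      = (r * s * ((cQ p q : ℚ) : ℝ)) • Finsupp.single (p + q) (1 : ℝ) := by
  unfold syncProd
  rw [Finsupp.sum_single_index, Finsupp.sum_single_index] <;> simp [Finsupp.sum_single_index]

/-- The one-letter synchronized insertion fails the left-symmetric identity:
`c(2,3)c(5,6) − c(3,6)c(2,9) − (c(3,2)c(5,6) − c(2,6)c(3,8)) = 16 ≠ 0`, hence for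
`x = a²`, `y = a³`, `z = a⁶` the difference of associators
`((x∘y)∘z − x∘(y∘z)) − ((y∘x)∘z − y∘(x∘z))` equals `16·a¹¹ ≠ 0`. -/
theorem syncProd_not_left_symmetric :
    cQ 2 3 * cQ 5 6 - cQ 3 6 * cQ 2 9 - (cQ 3 2 * cQ 5 6 - cQ 2 6 * cQ 3 8) = 16 ∧
    (syncProd (syncProd (Finsupp.single 2 1) (Finsupp.single 3 1)) (Finsupp.single 6 1)
        - syncProd (Finsupp.single 2 1)
            (syncProd (Finsupp.single 3 1) (Finsupp.single 6 1)))
      - (syncProd (syncProd (Finsupp.single 3 1) (Finsupp.single 2 1)) (Finsupp.single 6 1)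
        - syncProd (Finsupp.single 3 1)
            (syncProd (Finsupp.single 2 1) (Finsupp.single 6 1))) =
      (16 : ℝ) • Finsupp.single 11 1 ∧
    (syncProd (syncProd (Finsupp.single 2 1) (Finsupp.single 3 1)) (Finsupp.single 6 1)
        - syncProd (Finsupp.single 2 1)
            (syncProd (Finsupp.single 3 1) (Finsupp.single 6 1)))
      - (syncProd (syncProd (Finsupp.single 3 1) (Finsupp.single 2 1)) (Finsupp.single 6 1)
        - syncProd (Finsupp.single 3 1)
            (syncProd (Finsupp.single 2 1) (Finsupp.single 6 1))) ≠ 0 := by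
  have hc : ∀ p q : ℕ, ∀ r s : ℝ,
      syncProd (Finsupp.single p r) (Finsupp.single q s)
        = Finsupp.single (p + q) (r * s * ((cQ p q : ℚ) : ℝ)) := by
    intro p q r s
    rw [syncProd_single, Finsupp.smul_single, smul_eq_mul, mul_one]
  have key :
      (syncProd (syncProd (Finsupp.single 2 1) (Finsupp.single 3 1)) (Finsupp.single 6 1)
        - syncProd (Finsupp.single 2 1)
            (syncProd (Finsupp.single 3 1) (Finsupp.single 6 1)))
      - (syncProd (syncProd (Finsupp.single 3 1) (Finsupp.single 2 1)) (Finsupp.single 6 1)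
        - syncProd (Finsupp.single 3 1)
            (syncProd (Finsupp.single 2 1) (Finsupp.single 6 1))) =
      (16 : ℝ) • Finsupp.single 11 1 := by
    rw [hc 2 3, hc 3 6, hc 3 2, hc 2 6, hc 5 6, hc 2 9, hc 5 6, hc 3 8]
    norm_num [cQ]
    rw [← Finsupp.single_sub, ← Finsupp.single_sub, ← Finsupp.single_sub]
    norm_num
  refine ⟨by norm_num [cQ], key, ?_⟩
  rw [key, Finsupp.smul_single]
  simp [Finsupp.single_eq_zero]
end

section
/- The δ-restricted insertion on the path-connection alphabet {a, b, c} with δ(a,c) = 0 is not left-symmetric: with x = a, y = b, z = c one has ((x ∘ y) ∘ z) − (x ∘ (y ∘ z)) = 0, while ((y ∘ x) ∘ z) − (y ∘ (x ∘ z)) = abc + cba ≠ 0, so the left-symmetric identity (x,y,z) = (y,x,z) fails. -/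
/-- The connection function `δ` on the alphabet `{a, b, c}` (modelled as `Fin 3`
with `a = 0`, `b = 1`, `c = 2`): `δ(s,t) = 1` except `δ(a,c) = δ(c,a) = 0`. -/
def del (s t : Fin 3) : ℕ :=
  if (s = 0 ∧ t = 2) ∨ (s = 2 ∧ t = 0) then 0 else 1

/-- A word is admissible if every pair of adjacent letters `s, t` in it satisfies
`δ(s,t) = 1`. -/
def Admissible (w : List (Fin 3)) : Prop :=
  w.Chain' fun s t => del s t = 1

instance : DecidablePred Admissible := fun w =>
  inferInstanceAs (Decidable (w.IsChain fun s t => del s t = 1))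

/-- The δ-restricted insertion of the word `x` into the word `y`: the sum over all
insertion positions of `y₁⋯y_i x y_{i+1}⋯y_q`, keeping only the admissible summands. -/
noncomputable def delWordIns (x y : List (Fin 3)) : List (Fin 3) →₀ ℝ :=
  ∑ i ∈ Finset.range (y.length + 1),
    if Admissible (y.take i ++ x ++ y.drop i) then
      Finsupp.single (y.take i ++ x ++ y.drop i) (1 : ℝ)
    else 0

/-- Bilinear extension of the δ-restricted insertion. -/
noncomputable def delIns (a b : List (Fin 3) →₀ ℝ) : List (Fin 3) →₀ ℝ :=
  a.sum fun x cx => b.sum fun y cy => (cx * cy) • delWordIns x y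


lemma delIns_single_single (x y : List (Fin 3)) :
    delIns (Finsupp.single x 1) (Finsupp.single y 1) = delWordIns x y := by
  unfold delIns
  rw [Finsupp.sum_single_index (by simp), Finsupp.sum_single_index (by simp)]
  simp

lemma delIns_add_right (a u v : List (Fin 3) →₀ ℝ) :
    delIns a (u + v) = delIns a u + delIns a v := by
  unfold delIns
  have h : ∀ (x : List (Fin 3)) (cx : ℝ),
      ((u + v).sum fun y cy => (cx * cy) • delWordIns x y)
        = (u.sum fun y cy => (cx * cy) • delWordIns x y)
          + (v.sum fun y cy => (cx * cy) • delWordIns x y) :=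
    fun x cx => Finsupp.sum_add_index' (fun y => by simp)
      (fun y c1 c2 => by rw [mul_add, add_smul])
  simp only [h]
  exact Finsupp.sum_add

lemma delIns_add_left (u v b : List (Fin 3) →₀ ℝ) :
    delIns (u + v) b = delIns u b + delIns v b := by
  unfold delIns
  refine Finsupp.sum_add_index' (fun x => by simp) (fun x c1 c2 => ?_)
  rw [← Finsupp.sum_add]
  congr 1; funext y cy; rw [add_mul, add_smul]

lemma delIns_zero_right (a : List (Fin 3) →₀ ℝ) : delIns a 0 = 0 := by
  unfold delIns; simp

lemma w01 : delWordIns [0] [1] = Finsupp.single [0,1] 1 + Finsupp.single [1,0] 1 := by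
  simp [delWordIns, Finset.sum_range_succ, Admissible, del, List.Chain']
lemma w10 : delWordIns [1] [0] = Finsupp.single [1,0] 1 + Finsupp.single [0,1] 1 := by
  simp [delWordIns, Finset.sum_range_succ, Admissible, del, List.Chain']
lemma w012 : delWordIns [0,1] [2] = Finsupp.single [0,1,2] 1 := by
  simp [delWordIns, Finset.sum_range_succ, Admissible, del, List.Chain']
lemma w102 : delWordIns [1,0] [2] = Finsupp.single [2,1,0] 1 := by
  simp [delWordIns, Finset.sum_range_succ, Admissible, del, List.Chain']
lemma w12 : delWordIns [1] [2] = Finsupp.single [1,2] 1 + Finsupp.single [2,1] 1 := by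
  simp [delWordIns, Finset.sum_range_succ, Admissible, del, List.Chain']
lemma w0_12 : delWordIns [0] [1,2] = Finsupp.single [0,1,2] 1 := by
  simp [delWordIns, Finset.sum_range_succ, Admissible, del, List.Chain']
lemma w0_21 : delWordIns [0] [2,1] = Finsupp.single [2,1,0] 1 := by
  simp [delWordIns, Finset.sum_range_succ, Admissible, del, List.Chain']
lemma w02 : delWordIns [0] [2] = 0 := by
  simp [delWordIns, Finset.sum_range_succ, Admissible, del, List.Chain']

/-- With `x = a`, `y = b`, `z = c`, the δ-restricted insertion satisfies
`(x∘y)∘z − x∘(y∘z) = 0` while `(y∘x)∘z − y∘(x∘z) = abc + cba ≠ 0`, so the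
left-symmetric identity `(x,y,z) = (y,x,z)` fails. -/
theorem delIns_not_left_symmetric :
    delIns (delIns (Finsupp.single [(0 : Fin 3)] 1) (Finsupp.single [1] 1))
          (Finsupp.single [2] 1)
        - delIns (Finsupp.single [(0 : Fin 3)] 1)
            (delIns (Finsupp.single [1] 1) (Finsupp.single [2] 1)) = 0 ∧
    delIns (delIns (Finsupp.single [(1 : Fin 3)] 1) (Finsupp.single [0] 1))
          (Finsupp.single [2] 1)
        - delIns (Finsupp.single [(1 : Fin 3)] 1)
            (delIns (Finsupp.single [0] 1) (Finsupp.single [2] 1)) =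
      Finsupp.single [(0 : Fin 3), 1, 2] 1 + Finsupp.single [2, 1, 0] 1 ∧
    Finsupp.single [(0 : Fin 3), 1, 2] (1 : ℝ) + Finsupp.single [2, 1, 0] 1 ≠ 0 ∧
    delIns (delIns (Finsupp.single [(0 : Fin 3)] 1) (Finsupp.single [1] 1))
          (Finsupp.single [2] 1)
        - delIns (Finsupp.single [(0 : Fin 3)] 1)
            (delIns (Finsupp.single [1] 1) (Finsupp.single [2] 1)) ≠
      delIns (delIns (Finsupp.single [(1 : Fin 3)] 1) (Finsupp.single [0] 1))
          (Finsupp.single [2] 1)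
        - delIns (Finsupp.single [(1 : Fin 3)] 1)
            (delIns (Finsupp.single [0] 1) (Finsupp.single [2] 1)) := by

  refine ⟨?_, ?_, ?_, ?_⟩
  case _ =>
    rw [delIns_single_single, delIns_single_single, w01, w12,
      delIns_add_left, delIns_add_right,
      delIns_single_single, delIns_single_single, delIns_single_single,
      delIns_single_single, w012, w102, w0_12, w0_21]
    abel
  case _ =>
    rw [delIns_single_single, delIns_single_single, w10, w02,
      delIns_add_left, delIns_single_single, delIns_single_single,
      w102, w012, delIns_zero_right, sub_zero, add_comm]
  case _ =>
    intro h
    have := DFunLike.congr_fun h [0, 1, 2]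
    simp [Finsupp.single_apply] at this
  case _ =>
    intro h
    rw [delIns_single_single, delIns_single_single, w01, w12,
      delIns_add_left, delIns_add_right,
      delIns_single_single, delIns_single_single, delIns_single_single,
      delIns_single_single, w012, w102, w0_12, w0_21,
      delIns_single_single, delIns_single_single, w10, w02,
      delIns_add_left, delIns_single_single, delIns_single_single,
      w102, w012, delIns_zero_right, sub_zero] at h
    have h0 := DFunLike.congr_fun h [0, 1, 2]
    simp [Finsupp.single_apply] at h0
end

section
/- (If direction of the main theorem.) Let f : ℕ × ℕ → ℝ satisfy f(m,n) f(m+n,p) = f(n,p) f(m,n+p) = f(m,p) f(n,m+p) for all m, n, p ≥ 1. Then the modified simplified insertion ⇒ is left-symmetric on nonempty words: for all nonempty words x, y, z over S, ((x ⇒ y) ⇒ z) − (x ⇒ (y ⇒ z)) = ((y ⇒ x) ⇒ z) − (y ⇒ (x ⇒ z)). -/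
/-- The modified simplified insertion on words:
`x ⇒ y = f(|x|, |y|) ∑_{i=0}^{q} y₁⋯y_i x y_{i+1}⋯y_q`. -/
noncomputable def modWordIns (f : ℕ → ℕ → ℝ) {S : Type} (x y : List S) :
    List S →₀ ℝ :=
  f x.length y.length • wordIns x y

/-- Bilinear extension of the modified simplified insertion. -/
noncomputable def modIns (f : ℕ → ℕ → ℝ) {S : Type} (a b : List S →₀ ℝ) :
    List S →₀ ℝ :=
  a.sum fun x cx => b.sum fun y cy => (cx * cy) • modWordIns f x y

/-! ### Auxiliary lemmas -/

lemma modIns_single_single {S : Type} (f : ℕ → ℕ → ℝ) (x y : List S) (a b : ℝ) :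
    modIns f (Finsupp.single x a) (Finsupp.single y b) = (a * b) • modWordIns f x y := by
  unfold modIns
  rw [Finsupp.sum_single_index, Finsupp.sum_single_index]
  · simp
  · simp [Finsupp.sum_single_index]

lemma modIns_add_left {S : Type} (f : ℕ → ℕ → ℝ) (a a' b : List S →₀ ℝ) :
    modIns f (a + a') b = modIns f a b + modIns f a' b := by
  unfold modIns
  rw [Finsupp.sum_add_index']
  · intro x; simp
  · intro x c c'; simp [add_mul, add_smul, Finsupp.sum_add]

lemma modIns_smul_left {S : Type} (f : ℕ → ℕ → ℝ) (c : ℝ) (a b : List S →₀ ℝ) :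
    modIns f (c • a) b = c • modIns f a b := by
  unfold modIns
  rw [Finsupp.sum_smul_index']
  · simp only [smul_eq_mul, Finsupp.smul_sum, mul_assoc, mul_smul]
  · intro x; simp

lemma modIns_zero_left {S : Type} (f : ℕ → ℕ → ℝ) (b : List S →₀ ℝ) :
    modIns f 0 b = 0 := by
  unfold modIns; simp

lemma modIns_sum_left {S : Type} (f : ℕ → ℕ → ℝ) {ι : Type} (s : Finset ι)
    (g : ι → (List S →₀ ℝ)) (b : List S →₀ ℝ) :
    modIns f (∑ i ∈ s, g i) b = ∑ i ∈ s, modIns f (g i) b := by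
  classical
  induction s using Finset.induction_on with
  | empty => simp [modIns_zero_left]
  | insert _ _ h ih => simp [Finset.sum_insert h, modIns_add_left, ih]

lemma modIns_add_right {S : Type} (f : ℕ → ℕ → ℝ) (a b b' : List S →₀ ℝ) :
    modIns f a (b + b') = modIns f a b + modIns f a b' := by
  unfold modIns
  rw [← Finsupp.sum_add]
  congr 1; ext x cx
  rw [Finsupp.sum_add_index']
  · intro y; simp
  · intro y c c'; simp [mul_add, add_smul]

lemma modIns_smul_right {S : Type} (f : ℕ → ℕ → ℝ) (c : ℝ) (a b : List S →₀ ℝ) :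
    modIns f a (c • b) = c • modIns f a b := by
  unfold modIns
  rw [Finsupp.smul_sum]
  congr 1; funext x cx
  rw [Finsupp.sum_smul_index']
  · simp only [smul_eq_mul, Finsupp.smul_sum, mul_left_comm, mul_smul]
  · intro y; simp

lemma modIns_zero_right {S : Type} (f : ℕ → ℕ → ℝ) (a : List S →₀ ℝ) :
    modIns f a 0 = 0 := by
  unfold modIns; simp

lemma modIns_sum_right {S : Type} (f : ℕ → ℕ → ℝ) {ι : Type} (s : Finset ι)
    (g : ι → (List S →₀ ℝ)) (a : List S →₀ ℝ) :
    modIns f a (∑ i ∈ s, g i) = ∑ i ∈ s, modIns f a (g i) := by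
  classical
  induction s using Finset.induction_on with
  | empty => simp [modIns_zero_right]
  | insert _ _ h ih => simp [Finset.sum_insert h, modIns_add_right, ih]

/-- The sum of all "separated" double insertions of `u` before `v` into `z`. -/
noncomputable def sepSum {S : Type} (u v z : List S) : List S →₀ ℝ :=
  ∑ b ∈ Finset.range (z.length + 1), ∑ a ∈ Finset.range b,
    Finsupp.single (z.take a ++ u ++ (z.drop a).take (b - a) ++ v ++ z.drop b) (1 : ℝ)

section Lists
variable {S : Type} (x y z : List S)

lemma insWord_take_drop_lt {a j : ℕ} (haj : a ≤ j) (hj : j ≤ z.length) :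
    (z.take j ++ y ++ z.drop j).take a ++ x ++ (z.take j ++ y ++ z.drop j).drop a
      = z.take a ++ x ++ (z.drop a).take (j - a) ++ y ++ z.drop j := by
  have h1 : (z.take j).length = j := by simp [hj]
  rw [List.append_assoc (z.take j),
      List.take_append, List.drop_append, h1,
      Nat.sub_eq_zero_of_le haj]
  simp [List.take_take, min_eq_left haj, List.drop_take, List.append_assoc]

lemma insWord_take_drop_mid {i j : ℕ} (hi : i ≤ y.length) (hj : j ≤ z.length) :
    (z.take j ++ y ++ z.drop j).take (j + i) ++ x ++ (z.take j ++ y ++ z.drop j).drop (j + i)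
      = z.take j ++ (y.take i ++ x ++ y.drop i) ++ z.drop j := by
  have h1 : (z.take j).length = j := by simp [hj]
  have h2 : (z.take j).take (j + i) = z.take j := List.take_of_length_le (by omega)
  have h3 : (z.take j).drop (j + i) = [] := List.drop_eq_nil_of_le (by omega)
  rw [List.append_assoc (z.take j),
      List.take_append, List.drop_append, h1,
      Nat.add_sub_cancel_left (n := j), h2, h3,
      List.take_append (l₁ := y), List.drop_append (l₁ := y),
      Nat.sub_eq_zero_of_le hi]
  simp [List.append_assoc]

lemma insWord_take_drop_gt {t j : ℕ} (hj : j ≤ z.length) :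
    (z.take j ++ y ++ z.drop j).take (j + y.length + 1 + t) ++ x
        ++ (z.take j ++ y ++ z.drop j).drop (j + y.length + 1 + t)
      = z.take j ++ y ++ (z.drop j).take (j + 1 + t - j) ++ x ++ z.drop (j + 1 + t) := by
  have h1 : (z.take j).length = j := by simp [hj]
  have h2 : (z.take j).take (j + y.length + 1 + t) = z.take j :=
    List.take_of_length_le (by omega)
  have h3 : (z.take j).drop (j + y.length + 1 + t) = [] := List.drop_eq_nil_of_le (by omega)
  have h4 : j + y.length + 1 + t - j = y.length + (1 + t) := by omega
  have h5 : y.take (y.length + (1 + t)) = y := List.take_of_length_le (by omega)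
  have h6 : y.drop (y.length + (1 + t)) = [] := List.drop_eq_nil_of_le (by omega)
  have h7 : j + 1 + t - j = 1 + t := by omega
  have h8 : (z.drop j).drop (1 + t) = z.drop (j + 1 + t) := by
    rw [List.drop_drop]; congr 1; omega
  rw [List.append_assoc (z.take j),
      List.take_append, List.drop_append, h1, h2, h3, h4,
      List.take_append (l₁ := y), List.drop_append (l₁ := y),
      h5, h6, Nat.add_sub_cancel_left (n := y.length), h7, h8]
  simp [List.append_assoc]

/-- The key combinatorial identity: summing all insertions of `x` into all words obtained by
inserting `y` into `z` yields the "nested" insertions plus the two separated sums. -/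
lemma key_insertion_split :
    ∑ j ∈ Finset.range (z.length + 1), wordIns x (z.take j ++ y ++ z.drop j)
      = (∑ j ∈ Finset.range (z.length + 1), ∑ i ∈ Finset.range (y.length + 1),
          Finsupp.single (z.take j ++ (y.take i ++ x ++ y.drop i) ++ z.drop j) (1 : ℝ))
        + sepSum x y z + sepSum y x z := by
  set n := y.length
  set p := z.length
  have hsplit : ∀ j ∈ Finset.range (p + 1),
      wordIns x (z.take j ++ y ++ z.drop j)
        = (∑ i ∈ Finset.range (n + 1),
            Finsupp.single (z.take j ++ (y.take i ++ x ++ y.drop i) ++ z.drop j) (1 : ℝ))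
          + (∑ a ∈ Finset.range j,
              Finsupp.single (z.take a ++ x ++ (z.drop a).take (j - a) ++ y ++ z.drop j) (1 : ℝ))
          + (∑ b ∈ Finset.Ico (j + 1) (p + 1),
              Finsupp.single (z.take j ++ y ++ (z.drop j).take (b - j) ++ x ++ z.drop b) (1 : ℝ)) := by
    intro j hj
    rw [Finset.mem_range] at hj
    have hj' : j ≤ p := by omega
    have hU : (z.take j ++ y ++ z.drop j).length = n + p := by
      simp [List.length_append, List.length_take, List.length_drop]
      omega
    rw [wordIns, hU]
    have e1 : Finset.range (n + p + 1) = Finset.Ico 0 (n + p + 1) := by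
      rw [Finset.range_eq_Ico]
    rw [e1, ← Finset.sum_Ico_consecutive _ (Nat.zero_le j) (by omega : j ≤ n + p + 1),
        ← Finset.sum_Ico_consecutive _ (by omega : j ≤ j + n + 1) (by omega : j + n + 1 ≤ n + p + 1),
        ← Finset.range_eq_Ico]
    have eA : ∑ k ∈ Finset.range j,
        Finsupp.single ((z.take j ++ y ++ z.drop j).take k ++ x ++ (z.take j ++ y ++ z.drop j).drop k) (1 : ℝ)
        = ∑ a ∈ Finset.range j,
          Finsupp.single (z.take a ++ x ++ (z.drop a).take (j - a) ++ y ++ z.drop j) (1 : ℝ) := by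
      refine Finset.sum_congr rfl fun a ha => ?_
      rw [Finset.mem_range] at ha
      rw [insWord_take_drop_lt x y z (le_of_lt ha) hj']
    have eB : ∑ k ∈ Finset.Ico j (j + n + 1),
        Finsupp.single ((z.take j ++ y ++ z.drop j).take k ++ x ++ (z.take j ++ y ++ z.drop j).drop k) (1 : ℝ)
        = ∑ i ∈ Finset.range (n + 1),
          Finsupp.single (z.take j ++ (y.take i ++ x ++ y.drop i) ++ z.drop j) (1 : ℝ) := by
      rw [Finset.sum_Ico_eq_sum_range]
      have : j + n + 1 - j = n + 1 := by omega
      rw [this]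
      refine Finset.sum_congr rfl fun i hi => ?_
      rw [Finset.mem_range] at hi
      rw [insWord_take_drop_mid x y z (by omega : i ≤ n) hj']
    have eC : ∑ k ∈ Finset.Ico (j + n + 1) (n + p + 1),
        Finsupp.single ((z.take j ++ y ++ z.drop j).take k ++ x ++ (z.take j ++ y ++ z.drop j).drop k) (1 : ℝ)
        = ∑ b ∈ Finset.Ico (j + 1) (p + 1),
          Finsupp.single (z.take j ++ y ++ (z.drop j).take (b - j) ++ x ++ z.drop b) (1 : ℝ) := by
      rw [Finset.sum_Ico_eq_sum_range, Finset.sum_Ico_eq_sum_range]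
      have e2 : n + p + 1 - (j + n + 1) = p - j := by omega
      have e3 : p + 1 - (j + 1) = p - j := by omega
      rw [e2, e3]
      refine Finset.sum_congr rfl fun t ht => ?_
      rw [Finset.mem_range] at ht
      have := insWord_take_drop_gt x y z (t := t) hj'
      have e5 : j + n + 1 + t = j + y.length + 1 + t := by omega
      rw [e5, this]
    rw [eA, eB, eC]
    abel
  rw [Finset.sum_congr rfl hsplit, Finset.sum_add_distrib, Finset.sum_add_distrib]
  have hC : (∑ j ∈ Finset.range (p + 1), ∑ b ∈ Finset.Ico (j + 1) (p + 1),
      Finsupp.single (z.take j ++ y ++ (z.drop j).take (b - j) ++ x ++ z.drop b) (1 : ℝ))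
      = sepSum y x z := by
    rw [sepSum]
    simp only [Finset.range_eq_Ico]
    rw [Finset.sum_Ico_Ico_comm']
  rw [hC]
  rfl

end Lists

lemma modIns_triple_left {S : Type} (f : ℕ → ℕ → ℝ) (x y z : List S) :
    modIns f (modIns f (Finsupp.single x 1) (Finsupp.single y 1)) (Finsupp.single z 1)
      = (f x.length y.length * f (x.length + y.length) z.length) •
        ∑ j ∈ Finset.range (z.length + 1), ∑ i ∈ Finset.range (y.length + 1),
          Finsupp.single (z.take j ++ (y.take i ++ x ++ y.drop i) ++ z.drop j) (1 : ℝ) := by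
  rw [modIns_single_single, one_mul, one_smul, modWordIns, modIns_smul_left, wordIns,
      modIns_sum_left]
  have h : ∀ i ∈ Finset.range (y.length + 1),
      modIns f (Finsupp.single (y.take i ++ x ++ y.drop i) 1) (Finsupp.single z 1)
        = f (x.length + y.length) z.length •
          ∑ j ∈ Finset.range (z.length + 1),
            Finsupp.single (z.take j ++ (y.take i ++ x ++ y.drop i) ++ z.drop j) (1 : ℝ) := by
    intro i hi
    rw [Finset.mem_range] at hi
    rw [modIns_single_single, one_mul, one_smul, modWordIns]
    have hlen : (y.take i ++ x ++ y.drop i).length = x.length + y.length := by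
      simp [List.length_append]
      omega
    rw [hlen]
    rfl
  rw [Finset.sum_congr rfl h, ← Finset.smul_sum, smul_smul, Finset.sum_comm]

lemma modIns_triple_right {S : Type} (f : ℕ → ℕ → ℝ) (x y z : List S) :
    modIns f (Finsupp.single x 1) (modIns f (Finsupp.single y 1) (Finsupp.single z 1))
      = (f y.length z.length * f x.length (y.length + z.length)) •
        ((∑ j ∈ Finset.range (z.length + 1), ∑ i ∈ Finset.range (y.length + 1),
            Finsupp.single (z.take j ++ (y.take i ++ x ++ y.drop i) ++ z.drop j) (1 : ℝ))
          + sepSum x y z + sepSum y x z) := by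
  rw [modIns_single_single, one_mul, one_smul, modWordIns, modIns_smul_right,
      wordIns, modIns_sum_right]
  have h : ∀ j ∈ Finset.range (z.length + 1),
      modIns f (Finsupp.single x 1) (Finsupp.single (z.take j ++ y ++ z.drop j) 1)
        = f x.length (y.length + z.length) • wordIns x (z.take j ++ y ++ z.drop j) := by
    intro j hj
    rw [Finset.mem_range] at hj
    rw [modIns_single_single, one_mul, one_smul, modWordIns]
    have hlen : (z.take j ++ y ++ z.drop j).length = y.length + z.length := by
      simp [List.length_append]
      omega
    rw [hlen]
  rw [Finset.sum_congr rfl h, ← Finset.smul_sum, smul_smul, key_insertion_split]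

/-- (If direction of the main theorem.) If `f` satisfies
`f(m,n)f(m+n,p) = f(n,p)f(m,n+p) = f(m,p)f(n,m+p)` for all `m, n, p ≥ 1`, then the
modified simplified insertion is left-symmetric on nonempty words. -/
theorem modIns_left_symmetric_of_cocycle {S : Type} [Nonempty S] (f : ℕ → ℕ → ℝ)
    (hf : ∀ m n p : ℕ, 1 ≤ m → 1 ≤ n → 1 ≤ p →
      f m n * f (m + n) p = f n p * f m (n + p) ∧
      f n p * f m (n + p) = f m p * f n (m + p)) :
    ∀ x y z : List S, x ≠ [] → y ≠ [] → z ≠ [] →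
      modIns f (modIns f (Finsupp.single x 1) (Finsupp.single y 1)) (Finsupp.single z 1)
          - modIns f (Finsupp.single x 1)
              (modIns f (Finsupp.single y 1) (Finsupp.single z 1)) =
        modIns f (modIns f (Finsupp.single y 1) (Finsupp.single x 1)) (Finsupp.single z 1)
          - modIns f (Finsupp.single y 1)
              (modIns f (Finsupp.single x 1) (Finsupp.single z 1)) := by
  intro x y z hx hy hz
  have hm : 1 ≤ x.length := List.length_pos_iff.mpr hx
  have hn : 1 ≤ y.length := List.length_pos_iff.mpr hy
  have hp : 1 ≤ z.length := List.length_pos_iff.mpr hz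
  obtain ⟨h1, h2⟩ := hf x.length y.length z.length hm hn hp
  obtain ⟨h1', _⟩ := hf y.length x.length z.length hn hm hp
  rw [modIns_triple_left f x y z, modIns_triple_right f x y z,
      modIns_triple_left f y x z, modIns_triple_right f y x z, h1, h1', h2]
  simp only [smul_add]
  abel
end

section
/- For all words x = x₁⋯x_m, y = y₁⋯y_n, z = z₁⋯z_r over S, the associator of the modified simplified insertion satisfies ((x ⇒ y) ⇒ z) − (x ⇒ (y ⇒ z)) = [f(m,n)f(m+n,r) − f(n,r)f(m,n+r)] · ∑_{k=0}^{r} ∑_{j=0}^{n} z₁⋯z_k y₁⋯y_j x y_{j+1}⋯y_n z_{k+1}⋯z_r − f(n,r)f(m,n+r) · [ ∑_{0 ≤ j < k ≤ r} z₁⋯z_j x z_{j+1}⋯z_k y z_{k+1}⋯z_r + ∑_{0 ≤ k < j ≤ r} z₁⋯z_k y z_{k+1}⋯z_j x z_{j+1}⋯z_r ]. -/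
/-- `∑_{k=0}^{r} ∑_{j=0}^{n} z₁⋯z_k y₁⋯y_j x y_{j+1}⋯y_n z_{k+1}⋯z_r`:
`x` inserted into `y`, and the result inserted into `z`. -/
noncomputable def nestedIns {S : Type} (x y z : List S) : List S →₀ ℝ :=
  ∑ k ∈ Finset.range (z.length + 1), ∑ j ∈ Finset.range (y.length + 1),
    Finsupp.single (z.take k ++ y.take j ++ x ++ y.drop j ++ z.drop k) (1 : ℝ)

namespace ModInsAux

variable {S : Type}

lemma modIns_single_left (f : ℕ → ℕ → ℝ) (x : List S) (b : List S →₀ ℝ) :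
    modIns f (Finsupp.single x 1) b = b.sum fun w c => c • modWordIns f x w := by
  unfold modIns
  rw [Finsupp.sum_single_index (by simp [Finsupp.sum])]
  simp only [one_mul]

lemma modIns_single_right (f : ℕ → ℕ → ℝ) (a : List S →₀ ℝ) (z : List S) :
    modIns f a (Finsupp.single z 1) = a.sum fun w c => c • modWordIns f w z := by
  unfold modIns
  apply Finsupp.sum_congr
  intro w _
  rw [Finsupp.sum_single_index (by simp), mul_one]

lemma wordIns_split (x y z : List S) {k : ℕ} (hk : k ≤ z.length) :
    wordIns x (z.take k ++ y ++ z.drop k) =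
      (∑ j ∈ Finset.range k,
        Finsupp.single (z.take j ++ x ++ (z.drop j).take (k - j) ++ y ++ z.drop k) (1:ℝ))
      + ((∑ j ∈ Finset.range (y.length + 1),
        Finsupp.single (z.take k ++ y.take j ++ x ++ y.drop j ++ z.drop k) (1:ℝ))
      + (∑ j ∈ Finset.Ico (k+1) (z.length+1),
        Finsupp.single (z.take k ++ y ++ (z.drop k).take (j - k) ++ x ++ z.drop j) (1:ℝ))) := by
  have hlen : (z.take k ++ y ++ z.drop k).length = y.length + z.length := by
    simp; omega
  unfold wordIns
  rw [hlen, (show Finset.range (y.length + z.length + 1) = Finset.Ico 0 (y.length + z.length + 1) from Finset.range_eq_Ico _),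
    ← Finset.sum_Ico_consecutive _ (Nat.zero_le k)
      (by omega : k ≤ y.length + z.length + 1),
    ← Finset.sum_Ico_consecutive _ (by omega : k ≤ k + (y.length + 1))
      (by omega : k + (y.length + 1) ≤ y.length + z.length + 1)]
  congr 1
  · rw [show Finset.Ico 0 k = Finset.range k from (Finset.range_eq_Ico k).symm]
    refine Finset.sum_congr rfl fun i hi => ?_
    have hik : i < k := Finset.mem_range.mp hi
    have h1 : i - k = 0 := by omega
    have h2 : min i k = i := by omega
    congr 1
    simp [List.take_append, List.drop_append,
      List.take_take, List.drop_take, hk, h1, h2, List.append_assoc]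
  congr 1
  · rw [Finset.sum_Ico_eq_sum_range]
    have : k + (y.length + 1) - k = y.length + 1 := by omega
    rw [this]
    refine Finset.sum_congr rfl fun j hj => ?_
    have hjn : j ≤ y.length := by
      have := Finset.mem_range.mp hj; omega
    have h1 : min (k + j) k = k := by omega
    have h2 : k + j - k = j := by omega
    have h3 : j - y.length = 0 := by omega
    have h4 : k - (k + j) = 0 := by omega
    congr 1
    simp [List.take_append, List.drop_append,
      List.take_take, List.drop_take, hk, h1, h2, h3, h4, List.append_assoc]
  · rw [Finset.sum_Ico_eq_sum_range, Finset.sum_Ico_eq_sum_range]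
    have e1 : y.length + z.length + 1 - (k + (y.length + 1)) = z.length - k := by omega
    have e2 : z.length + 1 - (k + 1) = z.length - k := by omega
    rw [e1, e2]
    refine Finset.sum_congr rfl fun t ht => ?_
    have htk : t < z.length - k := Finset.mem_range.mp ht
    have h1 : min (k + (y.length + 1) + t) k = k := by omega
    have h2 : k + (y.length + 1) + t - k = y.length + 1 + t := by omega
    have h3 : y.length + 1 + t - y.length = 1 + t := by omega
    have h4 : k - (k + (y.length + 1) + t) = 0 := by omega
    have h5 : k + 1 + t - k = 1 + t := by omega
    have h6 : y.length ≤ y.length + 1 + t := by omega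
    have h7 : List.drop (1 + t) (z.drop k) = z.drop (k + 1 + t) := by
      rw [List.drop_drop]; congr 1; omega
    congr 1
    simp [List.take_append, List.drop_append,
      List.take_take, List.drop_take, hk, h1, h2, h3, h4, h5, h7,
      List.take_of_length_le h6, List.drop_eq_nil_of_le h6, List.append_assoc]

lemma sum_wordIns_split (x y z : List S) :
    ∑ k ∈ Finset.range (z.length + 1), wordIns x (z.take k ++ y ++ z.drop k)
      = doubleIns x y z + (nestedIns x y z + doubleIns y x z) := by
  rw [Finset.sum_congr rfl fun k hk =>
    wordIns_split x y z (Nat.lt_succ_iff.mp (Finset.mem_range.mp hk))]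
  rw [Finset.sum_add_distrib, Finset.sum_add_distrib]
  congr 1
  congr 1
  · rw [Finset.sum_comm' (s := Finset.range (z.length + 1))
      (t := fun k => Finset.Ico (k+1) (z.length+1))
      (t' := Finset.range (z.length + 1)) (s' := fun j => Finset.range j)
      (by intro k j; simp [Finset.mem_Ico]; omega)]
    rfl

lemma modWordIns_eq_sum (f : ℕ → ℕ → ℝ) (x y : List S) :
    modWordIns f x y = ∑ j ∈ Finset.range (y.length + 1),
      Finsupp.single (y.take j ++ x ++ y.drop j) (f x.length y.length) := by
  unfold modWordIns wordIns
  rw [Finset.smul_sum]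
  simp [Finsupp.smul_single]

end ModInsAux

open ModInsAux in
/-- Closed formula for the associator of the modified simplified insertion, for words
`x, y, z` of lengths `m, n, r`:
`(x ⇒ y) ⇒ z − x ⇒ (y ⇒ z) = [f(m,n)f(m+n,r) − f(n,r)f(m,n+r)]·∑_{k,j} z⋯y⋯x⋯y⋯z
  − f(n,r)f(m,n+r)·[∑_{j<k} z⋯x⋯y⋯z + ∑_{k<j} z⋯y⋯x⋯z]`. -/
theorem modIns_associator_formula {S : Type} [Nonempty S] (f : ℕ → ℕ → ℝ)
    (x y z : List S) :
    modIns f (modIns f (Finsupp.single x 1) (Finsupp.single y 1)) (Finsupp.single z 1)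
        - modIns f (Finsupp.single x 1)
            (modIns f (Finsupp.single y 1) (Finsupp.single z 1)) =
      (f x.length y.length * f (x.length + y.length) z.length
          - f y.length z.length * f x.length (y.length + z.length)) • nestedIns x y z
        - (f y.length z.length * f x.length (y.length + z.length)) •
            (doubleIns x y z + doubleIns y x z) := by
  have hxy : modIns f (Finsupp.single x 1) (Finsupp.single y 1) = modWordIns f x y := by
    rw [modIns_single_left, Finsupp.sum_single_index (by simp), one_smul]
  have hyz : modIns f (Finsupp.single y 1) (Finsupp.single z 1) = modWordIns f y z := by
    rw [modIns_single_left, Finsupp.sum_single_index (by simp), one_smul]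
  have hL : modIns f (modWordIns f x y) (Finsupp.single z 1)
      = (f x.length y.length * f (x.length + y.length) z.length) • nestedIns x y z := by
    rw [modIns_single_right, modWordIns_eq_sum,
      ← Finsupp.sum_finset_sum_index (by simp) (fun a b c => add_smul b c _)]
    rw [Finset.sum_congr rfl fun j hj => Finsupp.sum_single_index (by simp)]
    have hw : ∀ j ∈ Finset.range (y.length + 1),
        f x.length y.length • modWordIns f (y.take j ++ x ++ y.drop j) z
          = (f x.length y.length * f (x.length + y.length) z.length) •
            ∑ k ∈ Finset.range (z.length + 1),
              Finsupp.single (z.take k ++ y.take j ++ x ++ y.drop j ++ z.drop k) (1:ℝ) := by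
      intro j hj
      have hjn : j ≤ y.length := Nat.lt_succ_iff.mp (Finset.mem_range.mp hj)
      have hlen : (y.take j ++ x ++ y.drop j).length = x.length + y.length := by
        simp; omega
      unfold modWordIns wordIns
      rw [hlen, smul_smul]
      congr 1
      refine Finset.sum_congr rfl fun k _ => ?_
      congr 1
      simp [List.append_assoc]
    rw [Finset.sum_congr rfl hw, ← Finset.smul_sum]
    unfold nestedIns
    rw [Finset.sum_comm]
  have hR : modIns f (Finsupp.single x 1) (modWordIns f y z)
      = (f y.length z.length * f x.length (y.length + z.length)) •
        (doubleIns x y z + (nestedIns x y z + doubleIns y x z)) := by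
    rw [modIns_single_left, modWordIns_eq_sum,
      ← Finsupp.sum_finset_sum_index (by simp) (fun a b c => add_smul b c _)]
    rw [Finset.sum_congr rfl fun k hk => Finsupp.sum_single_index (by simp)]
    have hw : ∀ k ∈ Finset.range (z.length + 1),
        f y.length z.length • modWordIns f x (z.take k ++ y ++ z.drop k)
          = (f y.length z.length * f x.length (y.length + z.length)) •
            wordIns x (z.take k ++ y ++ z.drop k) := by
      intro k hk
      have hkr : k ≤ z.length := Nat.lt_succ_iff.mp (Finset.mem_range.mp hk)
      have hlen : (z.take k ++ y ++ z.drop k).length = y.length + z.length := by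
        simp; omega
      unfold modWordIns
      rw [hlen, smul_smul]
    rw [Finset.sum_congr rfl hw, ← Finset.smul_sum, sum_wordIns_split]
  rw [hxy, hyz, hL, hR]
  module
end

section
/- For any fixed real number k, the exponential-weighted insertion product, given on words by x ⇒ y = e^{k·|x|·|y|} ∑_{i=0}^{q} y₁⋯y_i x y_{i+1}⋯y_q (where y = y₁⋯y_q), is left-symmetric: for all elements x, y, z of A, ((x ⇒ y) ⇒ z) − (x ⇒ (y ⇒ z)) = ((y ⇒ x) ⇒ z) − (y ⇒ (x ⇒ z)). -/
/-- The exponential-weighted insertion on words: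
`x ⇒ y = e^{k·|x|·|y|} ∑_{i=0}^{q} y₁⋯y_i x y_{i+1}⋯y_q`. -/
noncomputable def expWordIns (k : ℝ) {S : Type} (x y : List S) : List S →₀ ℝ :=
  Real.exp (k * x.length * y.length) • wordIns x y

/-- Bilinear extension of the exponential-weighted insertion to the ℝ-vector space
with basis all words over `S`. -/
noncomputable def expIns (k : ℝ) {S : Type} (a b : List S →₀ ℝ) : List S →₀ ℝ :=
  a.sum fun x cx => b.sum fun y cy => (cx * cy) • expWordIns k x y

namespace ExpInsAux

variable {S : Type}

/-- Insert `x` into `y` at slot `i`. -/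
def ins (x y : List S) (i : ℕ) : List S := y.take i ++ x ++ y.drop i

lemma ins_def (x y : List S) (i : ℕ) : ins x y i = y.take i ++ x ++ y.drop i := rfl

lemma wordIns_eq (x y : List S) :
    wordIns x y = ∑ i ∈ Finset.range (y.length + 1), Finsupp.single (ins x y i) (1 : ℝ) := rfl

lemma ins_length {x y : List S} {i : ℕ} (h : i ≤ y.length) :
    (ins x y i).length = x.length + y.length := by
  simp [ins]; omega

/-- Double insertion into `z` : first word at slot `a`, second at slot `b`, `a ≤ b`. -/
def W (z x : List S) (a : ℕ) (y : List S) (b : ℕ) : List S :=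
  z.take a ++ x ++ (z.take b).drop a ++ y ++ z.drop b

lemma insLeft {x y z : List S} {i j : ℕ} (hi : i ≤ z.length) (hj : j ≤ i) :
    ins x (ins y z i) j = W z x j y i := by
  have h1 : (z.take i).length = i := by simp; omega
  have ht : (ins y z i).take j = z.take j := by
    rw [ins_def, List.append_assoc,
      List.take_append_of_le_length (by rw [h1]; omega),
      List.take_take, show j ⊓ i = j by omega]
  have hd : (ins y z i).drop j = (z.take i).drop j ++ (y ++ z.drop i) := by
    rw [ins_def, List.append_assoc,
      List.drop_append_of_le_length (by rw [h1]; omega)]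
  rw [ins_def x (ins y z i) j, ht, hd]
  simp [W, List.append_assoc]

lemma insMid {x y z : List S} {i t : ℕ} (hi : i ≤ z.length) (ht : t ≤ y.length) :
    ins x (ins y z i) (i + t) = ins (ins x y t) z i := by
  have h1 : (z.take i).length = i := by simp; omega
  have htake : (ins y z i).take (i + t) = z.take i ++ y.take t := by
    rw [ins_def, List.append_assoc, List.take_append, h1,
      List.take_of_length_le (i := i + t) (l := z.take i) (by rw [h1]; omega),
      show i + t - i = t by omega,
      List.take_append, show t - y.length = 0 by omega]
    simp
  have hdrop : (ins y z i).drop (i + t) = y.drop t ++ z.drop i := by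
    rw [ins_def, List.append_assoc, List.drop_append, h1,
      List.drop_eq_nil_of_le (as := z.take i) (i := i + t) (by rw [h1]; omega),
      show i + t - i = t by omega,
      List.drop_append, show t - y.length = 0 by omega]
    simp
  rw [ins_def x (ins y z i) (i + t), htake, hdrop,
    ins_def (ins x y t) z i, ins_def x y t]
  simp [List.append_assoc]

lemma insRight {x y z : List S} {i b : ℕ} (hi : i ≤ b) (hb : b ≤ z.length) :
    ins x (ins y z i) (b + y.length) = W z y i x b := by
  have h1 : (z.take i).length = i := by simp; omega
  have htake : (ins y z i).take (b + y.length)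
      = z.take i ++ (y ++ (z.drop i).take (b - i)) := by
    rw [ins_def, List.append_assoc, List.take_append, h1,
      List.take_of_length_le (i := b + y.length) (l := z.take i) (by rw [h1]; omega),
      List.take_append,
      List.take_of_length_le (i := b + y.length - i) (l := y) (by omega),
      show b + y.length - i - y.length = b - i by omega]
  have hdrop : (ins y z i).drop (b + y.length) = z.drop b := by
    rw [ins_def, List.append_assoc, List.drop_append, h1,
      List.drop_eq_nil_of_le (as := z.take i) (i := b + y.length) (by rw [h1]; omega),
      List.drop_append,
      List.drop_eq_nil_of_le (as := y) (i := b + y.length - i) (by omega),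
      show b + y.length - i - y.length = b - i by omega,
      List.drop_drop, show i + (b - i) = b by omega]
    simp
  rw [ins_def x (ins y z i) (b + y.length), htake, hdrop]
  simp [W, List.drop_take, List.append_assoc]

/-! ### Bilinearity of `expIns` -/

lemma expIns_zero_left (k : ℝ) (b : List S →₀ ℝ) : expIns k 0 b = 0 := by
  simp [expIns]

lemma expIns_zero_right (k : ℝ) (a : List S →₀ ℝ) : expIns k a 0 = 0 := by
  simp [expIns]

lemma expIns_add_left (k : ℝ) (a a' b : List S →₀ ℝ) :
    expIns k (a + a') b = expIns k a b + expIns k a' b := by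
  unfold expIns
  rw [Finsupp.sum_add_index' (by simp) ?_]
  intro w c₁ c₂
  rw [← Finsupp.sum_add]
  congr 1; funext y cy
  rw [← add_smul]; ring_nf

lemma expIns_add_right (k : ℝ) (a b b' : List S →₀ ℝ) :
    expIns k a (b + b') = expIns k a b + expIns k a b' := by
  unfold expIns
  rw [← Finsupp.sum_add]
  congr 1; funext x cx
  rw [Finsupp.sum_add_index' (by simp) ?_]
  intro w c₁ c₂
  rw [← add_smul]; ring_nf

lemma expIns_smul_left (k c : ℝ) (a b : List S →₀ ℝ) :
    expIns k (c • a) b = c • expIns k a b := by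
  unfold expIns
  rw [Finsupp.sum_smul_index (by simp), Finsupp.smul_sum]
  congr 1; funext x cx
  rw [Finsupp.smul_sum]
  congr 1; funext y cy
  rw [mul_assoc, mul_smul]

lemma expIns_smul_right (k c : ℝ) (a b : List S →₀ ℝ) :
    expIns k a (c • b) = c • expIns k a b := by
  unfold expIns
  rw [Finsupp.smul_sum]
  congr 1; funext x cx
  rw [Finsupp.sum_smul_index (by simp), Finsupp.smul_sum]
  congr 1; funext y cy
  rw [show cx * (c * cy) = c * (cx * cy) by ring, mul_smul]

lemma expIns_single_single (k : ℝ) (x y : List S) (cx cy : ℝ) :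
    expIns k (Finsupp.single x cx) (Finsupp.single y cy) = (cx * cy) • expWordIns k x y := by
  unfold expIns
  rw [Finsupp.sum_single_index (by simp), Finsupp.sum_single_index (by simp)]

lemma expIns_sum_left {ι : Type*} (k : ℝ) (s : Finset ι) (f : ι → List S →₀ ℝ)
    (b : List S →₀ ℝ) : expIns k (∑ i ∈ s, f i) b = ∑ i ∈ s, expIns k (f i) b := by
  classical
  induction s using Finset.induction_on with
  | empty => simp [expIns_zero_left]
  | @insert a s h ih => simp [Finset.sum_insert h, expIns_add_left, ih]

lemma expIns_sum_right {ι : Type*} (k : ℝ) (s : Finset ι) (f : ι → List S →₀ ℝ)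
    (a : List S →₀ ℝ) : expIns k a (∑ i ∈ s, f i) = ∑ i ∈ s, expIns k a (f i) := by
  classical
  induction s using Finset.induction_on with
  | empty => simp [expIns_zero_right]
  | @insert a s h ih => simp [Finset.sum_insert h, expIns_add_right, ih]

/-! ### The combinatorial heart -/

noncomputable def A (x y z : List S) : List S →₀ ℝ :=
  ∑ i ∈ Finset.range (y.length + 1), wordIns (ins x y i) z

noncomputable def B (x y z : List S) : List S →₀ ℝ :=
  ∑ i ∈ Finset.range (z.length + 1), wordIns x (ins y z i)

noncomputable def D (x y z : List S) : List S →₀ ℝ :=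
  ∑ a ∈ Finset.range (z.length + 1), ∑ b ∈ Finset.Ico (a + 1) (z.length + 1),
    (Finsupp.single (W z x a y b) (1 : ℝ) + Finsupp.single (W z y a x b) (1 : ℝ))

lemma D_symm (x y z : List S) : D x y z = D y x z := by
  unfold D
  refine Finset.sum_congr rfl fun a _ => Finset.sum_congr rfl fun b _ => ?_
  rw [add_comm]

/-- Triangular sum swap. -/
lemma tri_swap {M : Type*} [AddCommMonoid M] (n : ℕ) (f : ℕ → ℕ → M) :
    ∑ i ∈ Finset.range n, ∑ j ∈ Finset.range i, f i j
      = ∑ j ∈ Finset.range n, ∑ i ∈ Finset.Ico (j + 1) n, f i j := by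
  induction n with
  | zero => simp
  | succ n ih =>
    rw [Finset.sum_range_succ, ih, Finset.sum_range_succ]
    have h : ∀ j ∈ Finset.range n,
        ∑ i ∈ Finset.Ico (j + 1) (n + 1), f i j
          = ∑ i ∈ Finset.Ico (j + 1) n, f i j + f n j := by
      intro j hj
      rw [Finset.mem_range] at hj
      rw [Finset.sum_Ico_succ_top (by omega)]
    rw [Finset.sum_congr rfl h, Finset.sum_add_distrib, Finset.Ico_self, Finset.sum_empty]
    abel

lemma B_eq (x y z : List S) : B x y z = A x y z + D x y z := by
  have hB : B x y z = ∑ i ∈ Finset.range (z.length + 1),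
      ∑ j ∈ Finset.range (y.length + z.length + 1),
        Finsupp.single (ins x (ins y z i) j) (1 : ℝ) := by
    unfold B
    refine Finset.sum_congr rfl fun i hi => ?_
    rw [Finset.mem_range] at hi
    rw [wordIns_eq, ins_length (by omega)]
  have hsplit : ∀ i ∈ Finset.range (z.length + 1),
      (∑ j ∈ Finset.range (y.length + z.length + 1),
          Finsupp.single (ins x (ins y z i) j) (1 : ℝ))
        = (∑ t ∈ Finset.range (y.length + 1), Finsupp.single (ins (ins x y t) z i) (1 : ℝ))
          + ((∑ a ∈ Finset.range i, Finsupp.single (W z x a y i) (1 : ℝ))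
            + ∑ b ∈ Finset.Ico (i + 1) (z.length + 1),
                Finsupp.single (W z y i x b) (1 : ℝ)) := by
    intro i hi
    rw [Finset.mem_range] at hi
    have hi' : i ≤ z.length := by omega
    rw [Finset.range_eq_Ico,
      ← Finset.sum_Ico_consecutive _ (Nat.zero_le i)
        (show i ≤ y.length + z.length + 1 by omega),
      ← Finset.sum_Ico_consecutive _ (show i ≤ i + y.length + 1 by omega)
        (show i + y.length + 1 ≤ y.length + z.length + 1 by omega)]
    have h1 : ∑ j ∈ Finset.Ico 0 i, Finsupp.single (ins x (ins y z i) j) (1 : ℝ)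
        = ∑ a ∈ Finset.range i, Finsupp.single (W z x a y i) (1 : ℝ) := by
      rw [← Finset.range_eq_Ico]
      refine Finset.sum_congr rfl fun j hj => ?_
      rw [Finset.mem_range] at hj
      rw [insLeft hi' (by omega)]
    have h2 : ∑ j ∈ Finset.Ico i (i + y.length + 1),
          Finsupp.single (ins x (ins y z i) j) (1 : ℝ)
        = ∑ t ∈ Finset.range (y.length + 1), Finsupp.single (ins (ins x y t) z i) (1 : ℝ) := by
      rw [Finset.sum_Ico_eq_sum_range, show i + y.length + 1 - i = y.length + 1 by omega]
      refine Finset.sum_congr rfl fun t ht => ?_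
      rw [Finset.mem_range] at ht
      rw [insMid hi' (by omega)]
    have h3 : ∑ j ∈ Finset.Ico (i + y.length + 1) (y.length + z.length + 1),
          Finsupp.single (ins x (ins y z i) j) (1 : ℝ)
        = ∑ b ∈ Finset.Ico (i + 1) (z.length + 1), Finsupp.single (W z y i x b) (1 : ℝ) := by
      rw [Finset.sum_Ico_eq_sum_range, Finset.sum_Ico_eq_sum_range,
        show y.length + z.length + 1 - (i + y.length + 1) = z.length - i by omega,
        show z.length + 1 - (i + 1) = z.length - i by omega]
      refine Finset.sum_congr rfl fun t ht => ?_
      rw [Finset.mem_range] at ht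
      rw [show i + y.length + 1 + t = (i + 1 + t) + y.length by omega,
        insRight (show i ≤ i + 1 + t by omega) (by omega)]
    rw [h1, h2, h3]
    abel
  rw [hB, Finset.sum_congr rfl hsplit, Finset.sum_add_distrib, Finset.sum_add_distrib]
  congr 1
  · -- middle part equals A
    rw [Finset.sum_comm]
    unfold A
    refine Finset.sum_congr rfl fun t ht => ?_
    rw [wordIns_eq]
  · -- side parts equal D
    unfold D
    rw [tri_swap (z.length + 1) (fun i a => Finsupp.single (W z x a y i) (1 : ℝ)),
      ← Finset.sum_add_distrib]
    refine Finset.sum_congr rfl fun a _ => ?_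
    rw [← Finset.sum_add_distrib]

lemma wordKey (k : ℝ) (x y z : List S) :
    expIns k (expWordIns k x y) (Finsupp.single z 1)
      - expIns k (Finsupp.single x 1) (expWordIns k y z)
    = expIns k (expWordIns k y x) (Finsupp.single z 1)
      - expIns k (Finsupp.single y 1) (expWordIns k x z) := by
  have key1 : ∀ u v : List S,
      expIns k (expWordIns k u v) (Finsupp.single z 1)
        = (Real.exp (k * u.length * v.length)
            * Real.exp (k * ((u.length : ℝ) + v.length) * z.length)) • A u v z := by
    intro u v
    have h : ∀ i ∈ Finset.range (v.length + 1),
        expIns k (Finsupp.single (ins u v i) 1) (Finsupp.single z 1)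
          = Real.exp (k * ((u.length : ℝ) + v.length) * z.length)
              • wordIns (ins u v i) z := by
      intro i hi
      rw [Finset.mem_range] at hi
      rw [expIns_single_single, one_mul, one_smul]
      unfold expWordIns
      rw [ins_length (by omega)]
      congr 1
      push_cast
      ring
    unfold A
    unfold expWordIns
    rw [expIns_smul_left, wordIns_eq, expIns_sum_left, Finset.sum_congr rfl h,
      ← Finset.smul_sum, smul_smul]
  have key2 : ∀ u v : List S,
      expIns k (Finsupp.single u 1) (expWordIns k v z)
        = (Real.exp (k * v.length * z.length)
            * Real.exp (k * u.length * ((v.length : ℝ) + z.length))) • B u v z := by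
    intro u v
    have h : ∀ i ∈ Finset.range (z.length + 1),
        expIns k (Finsupp.single u 1) (Finsupp.single (ins v z i) 1)
          = Real.exp (k * u.length * ((v.length : ℝ) + z.length))
              • wordIns u (ins v z i) := by
      intro i hi
      rw [Finset.mem_range] at hi
      rw [expIns_single_single, one_mul, one_smul]
      unfold expWordIns
      rw [ins_length (by omega)]
      congr 1
      push_cast
      ring
    unfold B
    unfold expWordIns
    rw [expIns_smul_right, wordIns_eq, expIns_sum_right, Finset.sum_congr rfl h,
      ← Finset.smul_sum, smul_smul]
  rw [key1 x y, key1 y x, key2 x y, key2 y x]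
  have c1 : Real.exp (k * x.length * y.length)
      * Real.exp (k * ((x.length : ℝ) + y.length) * z.length)
      = Real.exp (k * ((x.length : ℝ) * y.length + x.length * z.length
          + y.length * z.length)) := by
    rw [← Real.exp_add]; congr 1; ring
  have c2 : Real.exp (k * y.length * z.length)
      * Real.exp (k * x.length * ((y.length : ℝ) + z.length))
      = Real.exp (k * ((x.length : ℝ) * y.length + x.length * z.length
          + y.length * z.length)) := by
    rw [← Real.exp_add]; congr 1; ring
  have c3 : Real.exp (k * y.length * x.length)
      * Real.exp (k * ((y.length : ℝ) + x.length) * z.length)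
      = Real.exp (k * ((x.length : ℝ) * y.length + x.length * z.length
          + y.length * z.length)) := by
    rw [← Real.exp_add]; congr 1; ring
  have c4 : Real.exp (k * x.length * z.length)
      * Real.exp (k * y.length * ((x.length : ℝ) + z.length))
      = Real.exp (k * ((x.length : ℝ) * y.length + x.length * z.length
          + y.length * z.length)) := by
    rw [← Real.exp_add]; congr 1; ring
  rw [c1, c2, c3, c4, ← smul_sub, ← smul_sub]
  congr 1
  rw [B_eq x y z, B_eq y x z, D_symm x y z]
  abel

end ExpInsAux

open ExpInsAux in
/-- For any fixed real `k`, the exponential-weighted insertion product is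
left-symmetric: `(x ⇒ y) ⇒ z − x ⇒ (y ⇒ z) = (y ⇒ x) ⇒ z − y ⇒ (x ⇒ z)` for all
elements `x, y, z` of the algebra. -/
theorem expIns_left_symmetric {S : Type} [Nonempty S] (k : ℝ)
    (x y z : List S →₀ ℝ) :
    expIns k (expIns k x y) z - expIns k x (expIns k y z) =
      expIns k (expIns k y x) z - expIns k y (expIns k x z) := by
  induction x using Finsupp.induction_linear with
  | zero => simp [expIns_zero_left, expIns_zero_right]
  | add f g hf hg =>
    simp only [expIns_add_left, expIns_add_right]
    linear_combination (norm := abel) hf + hg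
  | single xw xc =>
    induction y using Finsupp.induction_linear with
    | zero => simp [expIns_zero_left, expIns_zero_right]
    | add f g hf hg =>
      simp only [expIns_add_left, expIns_add_right]
      linear_combination (norm := abel) hf + hg
    | single yw yc =>
      induction z using Finsupp.induction_linear with
      | zero => simp [expIns_zero_left, expIns_zero_right]
      | add f g hf hg =>
        simp only [expIns_add_left, expIns_add_right]
        linear_combination (norm := abel) hf + hg
      | single zw zc =>
        have hx : (Finsupp.single xw xc : List S →₀ ℝ) = xc • Finsupp.single xw 1 := by
          rw [Finsupp.smul_single, smul_eq_mul, mul_one]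
        have hy : (Finsupp.single yw yc : List S →₀ ℝ) = yc • Finsupp.single yw 1 := by
          rw [Finsupp.smul_single, smul_eq_mul, mul_one]
        have hz : (Finsupp.single zw zc : List S →₀ ℝ) = zc • Finsupp.single zw 1 := by
          rw [Finsupp.smul_single, smul_eq_mul, mul_one]
        have base : expIns k (expIns k (Finsupp.single xw 1) (Finsupp.single yw 1))
              (Finsupp.single zw 1)
            - expIns k (Finsupp.single xw 1)
              (expIns k (Finsupp.single yw 1) (Finsupp.single zw 1))
          = expIns k (expIns k (Finsupp.single yw 1) (Finsupp.single xw 1))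
              (Finsupp.single zw 1)
            - expIns k (Finsupp.single yw 1)
              (expIns k (Finsupp.single xw 1) (Finsupp.single zw 1)) := by
          simp only [expIns_single_single, one_mul, one_smul]
          exact wordKey k xw yw zw
        rw [hx, hy, hz]
        simp only [expIns_smul_left, expIns_smul_right]
        linear_combination (norm := module) (xc * yc * zc) • base
end
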